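/- arXiv:2510.13615 — 4 statements merged into one kernel-verified Lean document; each statement's English description precedes it below -/
import Mathlib

section
/- Let f₁, …, fₙ ∈ ℝᵈ be n pairwise distinct vectors. Then there exists a matrix A ∈ ℝ^{n×d} and a vector b ∈ ℝⁿ such that the vectors g_i = ReLU(A f_i + b) for i = 1, …, n are linearly independent, where ReLU is applied coordinatewise. -/
open Polynomial in
lemma aux_poly_ne_zero (d : ℕ) (v : Fin d → ℝ) (hv : v ≠ 0) :
    (∑ k : Fin d, Polynomial.C (v k) * Polynomial.X ^ (k : ℕ)) ≠ 0 := by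
  obtain ⟨k, hk⟩ : ∃ k, v k ≠ 0 := by
    by_contra h; push_neg at h; exact hv (funext h)
  intro h
  have := congrArg (fun p => Polynomial.coeff p (k : ℕ)) h
  simp only [Polynomial.finset_sum_coeff, Polynomial.coeff_C_mul, Polynomial.coeff_X_pow,
    Polynomial.coeff_zero] at this
  rw [Finset.sum_eq_single k] at this
  · simp at this; exact hk this
  · intro b _ hb
    have : (k : ℕ) ≠ (b : ℕ) := fun h' => hb (Fin.ext h'.symm)
    simp [if_neg this]
  · simp

/-- If `f 1, …, f n` are pairwise distinct vectors in `ℝ^d`, there exist a matrix `A` and a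
bias vector `b` such that the vectors `g i = ReLU (A (f i) + b)` are linearly independent. -/
theorem stmt_0 (n d : ℕ) (f : Fin n → (Fin d → ℝ)) (hf : Function.Injective f) :
    ∃ (A : Matrix (Fin n) (Fin d) ℝ) (b : Fin n → ℝ),
      LinearIndependent ℝ (fun i : Fin n => fun j : Fin n => max 0 (A.mulVec (f i) j + b j)) := by
  classical
  -- the polynomial whose nonvanishing point separates all pairs
  set P : Polynomial ℝ :=
    ∏ p ∈ Finset.univ.offDiag (α := Fin n),
      ∑ k : Fin d, Polynomial.C (f p.1 k - f p.2 k) * Polynomial.X ^ (k : ℕ) with hP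
  have hPne : P ≠ 0 := by
    rw [hP]
    apply Finset.prod_ne_zero_iff.2
    intro p hp
    apply aux_poly_ne_zero
    have hne : p.1 ≠ p.2 := (Finset.mem_offDiag.1 hp).2.2
    intro h0
    apply hne; apply hf; funext k
    have := congrFun h0 k
    simpa [sub_eq_zero] using this
  obtain ⟨t, ht⟩ := P.exists_eval_ne_zero_of_natDegree_lt_card hPne
    (lt_of_lt_of_le (Cardinal.nat_lt_aleph0 _) (Cardinal.aleph0_le_mk ℝ))
  set x : Fin n → ℝ := fun i => ∑ k : Fin d, t ^ (k : ℕ) * f i k with hx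
  have hxinj : Function.Injective x := by
    intro i j hij
    by_contra hne
    have hmem : (i, j) ∈ Finset.univ.offDiag (α := Fin n) := by
      simp [Finset.mem_offDiag, hne]
    rw [hP, Polynomial.eval_prod] at ht
    have := Finset.prod_ne_zero_iff.1 ht (i, j) hmem
    apply this
    simp only [Polynomial.eval_finset_sum, Polynomial.eval_mul, Polynomial.eval_C,
      Polynomial.eval_pow, Polynomial.eval_X]
    have : ∑ k : Fin d, (f i k - f j k) * t ^ (k : ℕ)
        = x i - x j := by
      rw [hx]; rw [← Finset.sum_sub_distrib]; congr 1; funext k; ring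
    rw [this, hij, sub_self]
  -- choose ε
  set G : Finset ℝ :=
    insert (1 : ℝ) ((Finset.univ.offDiag (α := Fin n)).image fun p => |x p.1 - x p.2|) with hG
  have hGne : G.Nonempty := ⟨1, by simp [hG]⟩
  set ε : ℝ := G.min' hGne with hε
  have hεpos : 0 < ε := by
    have hmem : G.min' hGne ∈ insert (1 : ℝ)
        ((Finset.univ.offDiag (α := Fin n)).image fun p => |x p.1 - x p.2|) :=
      G.min'_mem hGne
    rcases Finset.mem_insert.1 hmem with h | h
    · have h1 : (0:ℝ) < G.min' hGne := by rw [h]; norm_num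
      exact h1
    · obtain ⟨p, hp, hpe⟩ := Finset.mem_image.1 h
      have hne : p.1 ≠ p.2 := (Finset.mem_offDiag.1 hp).2.2
      have hxne : x p.1 ≠ x p.2 := fun h' => hne (hxinj h')
      have h1 : (0:ℝ) < G.min' hGne := by
        rw [← hpe]; exact abs_pos.2 (sub_ne_zero.2 hxne)
      exact h1
  have hεle : ∀ i j, i ≠ j → ε ≤ |x i - x j| := by
    intro i j hij
    apply G.min'_le
    rw [hG]
    exact Finset.mem_insert_of_mem (Finset.mem_image.2 ⟨(i, j), by simp [Finset.mem_offDiag, hij], rfl⟩)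
  -- define A and b
  refine ⟨fun (_ : Fin n) (k : Fin d) => t ^ (k : ℕ), fun j => ε - x j, ?_⟩
  have hmul : ∀ i j, (Matrix.mulVec (fun (_ : Fin n) (k : Fin d) => t ^ (k : ℕ)) (f i)) j = x i := by
    intro i j
    simp [Matrix.mulVec, dotProduct, hx]
  rw [Fintype.linearIndependent_iff]
  intro c hc
  by_contra h
  push_neg at h
  obtain ⟨i₁, hi₁⟩ := h
  set s : Finset (Fin n) := Finset.univ.filter (fun i => c i ≠ 0) with hs
  have hsne : s.Nonempty := ⟨i₁, by simp [hs, hi₁]⟩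
  obtain ⟨i₀, hi₀s, hi₀max⟩ := s.exists_max_image x hsne
  have hci₀ : c i₀ ≠ 0 := (Finset.mem_filter.1 hi₀s).2
  have hcol := congrFun hc i₀
  rw [Finset.sum_apply] at hcol
  simp only [Pi.smul_apply, smul_eq_mul, Pi.zero_apply] at hcol
  rw [Finset.sum_eq_single i₀] at hcol
  · rw [hmul] at hcol
    have : max 0 (x i₀ + (ε - x i₀)) = ε := by
      rw [add_sub_cancel]; exact max_eq_right hεpos.le
    rw [this] at hcol
    exact hci₀ (by
      rcases mul_eq_zero.1 hcol with h | h
      · exact h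
      · exact absurd h hεpos.ne')
  · intro i _ hii₀
    by_cases hci : c i = 0
    · rw [hci, zero_mul]
    · have his : i ∈ s := by simp [hs, hci]
      have hlt : x i < x i₀ :=
        lt_of_le_of_ne (hi₀max i his) (fun h' => hii₀ (hxinj h'))
      have : ε ≤ |x i - x i₀| := hεle i i₀ hii₀
      rw [abs_sub_comm, abs_of_pos (by linarith)] at this
      rw [hmul]
      have : x i + (ε - x i₀) ≤ 0 := by linarith
      rw [max_eq_left this, mul_zero]
  · intro h'; exact absurd (Finset.mem_univ i₀) h'
end

section
/- Let G be the circulant graph on ℤ/16ℤ with connection set {±1, ±2, ±4} and let H be the circulant graph on ℤ/16ℤ with connection set {±1, ±3, ±4}. Then G and H are not isomorphic. -/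
open Finset

private def FG : Finset (ZMod 16) := {1, 15, 2, 14, 4, 12}
private def FH : Finset (ZMod 16) := {1, 15, 3, 13, 4, 12}

private lemma adjG_iff (a b : ZMod 16) :
    (SimpleGraph.circulantGraph ({1, -1, 2, -2, 4, -4} : Set (ZMod 16))).Adj a b ↔
      a ≠ b ∧ a - b ∈ FG := by
  rw [SimpleGraph.circulantGraph, SimpleGraph.fromRel_adj]
  refine and_congr_right fun _ => ?_
  have : ∀ x : ZMod 16,
      ((x ∈ ({1, -1, 2, -2, 4, -4} : Set (ZMod 16))) ∨
        (-x ∈ ({1, -1, 2, -2, 4, -4} : Set (ZMod 16)))) ↔ x ∈ FG := by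
    simp only [Set.mem_insert_iff, Set.mem_singleton_iff]
    decide
  rw [show b - a = -(a - b) by ring] at *
  exact this (a - b)

private lemma adjH_iff (a b : ZMod 16) :
    (SimpleGraph.circulantGraph ({1, -1, 3, -3, 4, -4} : Set (ZMod 16))).Adj a b ↔
      a ≠ b ∧ a - b ∈ FH := by
  rw [SimpleGraph.circulantGraph, SimpleGraph.fromRel_adj]
  refine and_congr_right fun _ => ?_
  have : ∀ x : ZMod 16,
      ((x ∈ ({1, -1, 3, -3, 4, -4} : Set (ZMod 16))) ∨
        (-x ∈ ({1, -1, 3, -3, 4, -4} : Set (ZMod 16)))) ↔ x ∈ FH := by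
    simp only [Set.mem_insert_iff, Set.mem_singleton_iff]
    decide
  rw [show b - a = -(a - b) by ring] at *
  exact this (a - b)

set_option maxRecDepth 100000 in
private lemma countH : ∀ u v : ZMod 16, (u ≠ v ∧ u - v ∈ FH) →
    (univ.filter (fun w : ZMod 16 => (u ≠ w ∧ u - w ∈ FH) ∧ (v ≠ w ∧ v - w ∈ FH))).card = 2 := by
  decide

set_option maxRecDepth 100000 in
private lemma countG04 :
    (univ.filter (fun w : ZMod 16 =>
      ((0 : ZMod 16) ≠ w ∧ (0 : ZMod 16) - w ∈ FG) ∧ ((4 : ZMod 16) ≠ w ∧ (4 : ZMod 16) - w ∈ FG))).card = 1 := by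
  decide

/-- The circulant graph on `ℤ/16ℤ` with connection set `{±1, ±2, ±4}` is not isomorphic to
the circulant graph on `ℤ/16ℤ` with connection set `{±1, ±3, ±4}`. -/
theorem stmt_10 :
    IsEmpty
      (SimpleGraph.circulantGraph ({1, -1, 2, -2, 4, -4} : Set (ZMod 16)) ≃g
        SimpleGraph.circulantGraph ({1, -1, 3, -3, 4, -4} : Set (ZMod 16))) := by
  constructor
  intro f
  have hG : (SimpleGraph.circulantGraph ({1, -1, 2, -2, 4, -4} : Set (ZMod 16))).Adj 0 4 := by
    rw [adjG_iff]; decide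
  have hH : (SimpleGraph.circulantGraph ({1, -1, 3, -3, 4, -4} : Set (ZMod 16))).Adj (f 0) (f 4) :=
    f.map_adj_iff.mpr hG
  have hH' := (adjH_iff _ _).mp hH
  have key : (univ.filter (fun w : ZMod 16 =>
        ((0 : ZMod 16) ≠ w ∧ (0 : ZMod 16) - w ∈ FG) ∧ ((4 : ZMod 16) ≠ w ∧ (4 : ZMod 16) - w ∈ FG))).card =
      (univ.filter (fun w : ZMod 16 =>
        (f 0 ≠ w ∧ f 0 - w ∈ FH) ∧ (f 4 ≠ w ∧ f 4 - w ∈ FH))).card := by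
    refine Finset.card_bij' (fun w _ => f w) (fun w _ => f.symm w) ?_ ?_ ?_ ?_
    · intro w hw
      simp only [mem_filter, mem_univ, true_and] at hw ⊢
      rw [← adjG_iff, ← adjG_iff] at hw
      rw [← adjH_iff, ← adjH_iff]
      exact ⟨f.map_adj_iff.mpr hw.1, f.map_adj_iff.mpr hw.2⟩
    · intro w hw
      simp only [mem_filter, mem_univ, true_and] at hw ⊢
      rw [← adjH_iff, ← adjH_iff] at hw
      rw [← adjG_iff, ← adjG_iff]
      constructor
      · have := f.symm.map_adj_iff.mpr hw.1
        simpa using this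
      · have := f.symm.map_adj_iff.mpr hw.2
        simpa using this
    · intro w _; simp
    · intro w _; simp
  rw [countG04, countH _ _ hH'] at key
  exact absurd key (by norm_num)
end

section
/- For any finite simple graph G with m edges and arboricity α, the number of triangles in G is at most α·m. -/
open Finset

/-- The arboricity of a graph: the minimum number `k` of forests into which the edge set can
be partitioned (a partition of the edges into `k` acyclic graphs). -/
noncomputable def arboricity {V : Type} (G : SimpleGraph V) : ℕ :=
  sInf {k : ℕ | ∃ c : Sym2 V → Fin k, ∀ i : Fin k,
    (SimpleGraph.fromEdgeSet {e ∈ G.edgeSet | c e = i}).IsAcyclic}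

/-!
Partition the edges into `α` forests and orient each forest towards the root of each of its
components, i.e. send every edge to its endpoint farther from the root. In a forest no vertex
has two neighbours closer to the root, so every vertex is the far endpoint of at most one edge per
forest, hence of at most `α` edges overall. A triangle is counted once through each of its three
edges, and the triangles on an edge are determined by their third vertex, a neighbour of the
far endpoint. Hence `3 T ≤ ∑_e deg (far e) ≤ α ∑_v deg v = 2 α m`.
-/

lemma Finset.sum_comp_le_mul_sum {ι α : Type*} [Fintype α] [DecidableEq α] {s : Finset ι}
    {g : ι → α} {k : ℕ} (hg : ∀ a, #{i ∈ s | g i = a} ≤ k) (w : α → ℕ) :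
    ∑ i ∈ s, w (g i) ≤ k * ∑ a, w a := by
  rw [← Finset.sum_fiberwise' s g w, Finset.mul_sum]
  gcongr with a
  rw [sum_const, smul_eq_mul]
  exact Nat.mul_le_mul_right _ (hg a)

namespace SimpleGraph

variable {V : Type*} {G : SimpleGraph V}

lemma isAcyclic_fromEdgeSet_of_subsingleton {s : Set (Sym2 V)} (hs : s.Subsingleton) :
    (fromEdgeSet s).IsAcyclic := by
  rcases hs.eq_empty_or_singleton with rfl | ⟨e, rfl⟩
  · simp
  induction e using Sym2.ind with
  | _ u v =>
    refine (isAcyclic_starGraph u).anti fun x y hxy => ?_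
    simp only [fromEdgeSet_adj, Set.mem_singleton_iff, Sym2.eq_iff] at hxy
    rw [starGraph_adj]
    tauto

lemma IsAcyclic.eq_penultimate_of_adj_of_dist_lt (hG : G.IsAcyclic) {r u a : V}
    {p : G.Walk r u} (hp : p.IsPath) (ha : G.Adj u a) (hra : G.Reachable r a)
    (hlt : G.dist r a < G.dist r u) : a = p.penultimate := by
  classical
  obtain ⟨q, hq, hql⟩ := hra.exists_path_of_dist
  have hu : u ∉ q.support := fun hu =>
    (G.dist_le (q.takeUntil u hu)).trans (q.length_takeUntil_le_length hu) |>.trans_eq hql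
      |>.not_gt hlt
  exact hG.eq_penultimate_of_adj_end hp ha
    (hG.mem_support_of_ne_mem_support_of_adj_of_isPath hp hq ha hu)

lemma IsAcyclic.eq_of_adj_of_dist_lt (hG : G.IsAcyclic) {r u a b : V} (hr : G.Reachable r u)
    (ha : G.Adj u a) (hb : G.Adj u b) (hra : G.dist r a < G.dist r u)
    (hrb : G.dist r b < G.dist r u) : a = b := by
  obtain ⟨p, hp, -⟩ := hr.exists_path_of_dist
  rw [hG.eq_penultimate_of_adj_of_dist_lt hp ha (hr.trans ha.reachable) hra,
    hG.eq_penultimate_of_adj_of_dist_lt hp hb (hr.trans hb.reachable) hrb]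

theorem IsAcyclic.exists_injOn_edgeSet (hG : G.IsAcyclic) :
    ∃ f : Sym2 V → V, (∀ e, f e ∈ e) ∧ Set.InjOn f G.edgeSet := by
  let root (v : V) : V := (G.connectedComponentMk v).out
  have reachable_root (v : V) : G.Reachable (root v) v :=
    ConnectedComponent.exact (G.connectedComponentMk v).out_eq
  have root_eq {u v : V} (h : G.Adj u v) : root v = root u := by
    simp only [root, ConnectedComponent.connectedComponentMk_eq_of_adj h]
  let d (v : V) : ℕ := G.dist (root v) v
  have exists_max (e : Sym2 V) : ∃ x ∈ e, ∀ y ∈ e, d y ≤ d x := by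
    induction e using Sym2.ind with
    | _ u v =>
      rcases le_total (d u) (d v) with h | h
      · exact ⟨v, Sym2.mem_mk_right u v, by simp [h]⟩
      · exact ⟨u, Sym2.mem_mk_left u v, by simp [h]⟩
  choose f hf_mem hf_max using exists_max
  have parent {e : Sym2 V} (he : e ∈ G.edgeSet) :
      ∃ a, e = s(f e, a) ∧ G.Adj (f e) a ∧ G.dist (root (f e)) a < d (f e) := by
    obtain ⟨a, hea⟩ := Sym2.mem_iff_exists.mp (hf_mem e)
    have hadj : G.Adj (f e) a := by rwa [hea] at he
    have hle : G.dist (root a) a ≤ d (f e) :=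
      hf_max e a (by rw [hea]; exact Sym2.mem_mk_right _ _)
    refine ⟨a, hea, hadj, lt_of_le_of_ne ?_ ?_⟩
    · rwa [root_eq hadj] at hle
    · exact (hG.dist_ne_of_adj hadj (reachable_root _)).symm
  refine ⟨f, hf_mem, fun e₁ he₁ e₂ he₂ hf => ?_⟩
  obtain ⟨a, hea, ha, hda⟩ := parent he₁
  obtain ⟨b, heb, hb, hdb⟩ := parent he₂
  rw [hf] at ha hda
  rw [hea, heb, hf, hG.eq_of_adj_of_dist_lt (reachable_root _) ha hb hda hdb]

variable [Fintype V] [DecidableEq V] [DecidableRel G.Adj]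

lemma exists_endpoint_card_fiber_le {k : ℕ} (c : Sym2 V → Fin k)
    (hc : ∀ i, (fromEdgeSet {e ∈ G.edgeSet | c e = i}).IsAcyclic) :
    ∃ f : Sym2 V → V, (∀ e, f e ∈ e) ∧ ∀ v, #{e ∈ G.edgeFinset | f e = v} ≤ k := by
  choose g hg_mem hg_inj using fun i => (hc i).exists_injOn_edgeSet
  have mem_class {e : Sym2 V} {i : Fin k} (he : e ∈ G.edgeFinset) (hi : c e = i) :
      e ∈ (fromEdgeSet {e ∈ G.edgeSet | c e = i}).edgeSet := by
    rw [mem_edgeFinset] at he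
    rw [edgeSet_fromEdgeSet]
    exact ⟨⟨he, hi⟩, G.not_isDiag_of_mem_edgeSet he⟩
  refine ⟨fun e => g (c e) e, fun e => hg_mem _ e, fun v => ?_⟩
  -- within a fibre the colouring is injective, since each colour class is oriented injectively
  calc #{e ∈ G.edgeFinset | g (c e) e = v}
      ≤ #(univ : Finset (Fin k)) := by
        refine card_le_card_of_injOn c (fun _ _ => mem_univ _) fun e₁ he₁ e₂ he₂ hc₁₂ => ?_
        simp only [coe_filter, Set.mem_ofPred_eq] at he₁ he₂
        refine hg_inj (c e₁) (mem_class he₁.1 rfl) (mem_class he₂.1 hc₁₂.symm) ?_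
        rw [he₁.2, hc₁₂, he₂.2]
    _ = k := by simp

lemma card_filter_mem_sym2_cliqueFinset_le_degree {e : Sym2 V} (he : e ∈ G.edgeSet) {v : V}
    (hv : v ∈ e) :
    #{t ∈ G.cliqueFinset 3 | e ∈ t.sym2} ≤ G.degree v := by
  obtain ⟨w, rfl⟩ := Sym2.mem_iff_exists.mp hv
  have hvw : v ≠ w := (G.mem_edgeSet.mp he).ne
  rw [← card_neighborFinset_eq_degree]
  refine (card_le_card fun t ht => ?_).trans (card_image_le (f := fun x => {v, w, x}))
  simp only [mem_filter, mem_cliqueFinset_iff, mk_mem_sym2_iff] at ht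
  obtain ⟨ht3, hvt, hwt⟩ := ht
  have hw : w ∈ t.erase v := mem_erase.mpr ⟨hvw.symm, hwt⟩
  obtain ⟨x, hx⟩ : ∃ x, (t.erase v).erase w = {x} := card_eq_one.mp <| by
    rw [card_erase_of_mem hw, card_erase_of_mem hvt, ht3.card_eq]
  have hxt : x ∈ (t.erase v).erase w := hx ▸ mem_singleton_self x
  simp only [mem_erase] at hxt
  refine mem_image.mpr ⟨x, (mem_neighborFinset _ _ _).mpr ?_, ?_⟩
  · exact ht3.isClique hvt hxt.2.2 (Ne.symm hxt.2.1)
  · rw [← hx, insert_erase hw, insert_erase hvt]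

lemma three_le_card_filter_mem_sym2_edgeFinset {t : Finset V} (ht : t ∈ G.cliqueFinset 3) : 3 ≤ #{e ∈ G.edgeFinset | e ∈ t.sym2} := by
  obtain ⟨a, b, c, hab, hac, hbc, rfl⟩ := is3Clique_iff.mp (mem_cliqueFinset_iff.mp ht)
  have : #{s(a, b), s(a, c), s(b, c)} = 3 :=
    card_eq_three.mpr ⟨_, _, _, ?_, ?_, ?_, rfl⟩ <;> simp [hab.ne, hac.ne, hbc.ne]
  rw [← this]
  exact card_le_card (by simp [insert_subset, hab, hac, hbc])


theorem three_mul_card_cliqueFinset_three_le_sum_degree (f : Sym2 V → V) (hf : ∀ e, f e ∈ e) :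
    3 * #(G.cliqueFinset 3) ≤ ∑ e ∈ G.edgeFinset, G.degree (f e) :=
  calc 3 * #(G.cliqueFinset 3) = ∑ _t ∈ G.cliqueFinset 3, 3 := by
        rw [sum_const, smul_eq_mul, mul_comm]
    _ ≤ ∑ t ∈ G.cliqueFinset 3, #{e ∈ G.edgeFinset | e ∈ t.sym2} := by
      gcongr with t ht
      exact three_le_card_filter_mem_sym2_edgeFinset ht
    _ = ∑ e ∈ G.edgeFinset, #{t ∈ G.cliqueFinset 3 | e ∈ t.sym2} :=
      sum_card_bipartiteAbove_eq_sum_card_bipartiteBelow _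
    _ ≤ ∑ e ∈ G.edgeFinset, G.degree (f e) := by
      gcongr with e he
      exact card_filter_mem_sym2_cliqueFinset_le_degree (mem_edgeFinset.mp he) (hf e)

theorem card_cliqueFinset_three_le_mul_of_isAcyclic {k : ℕ} (c : Sym2 V → Fin k)
    (hc : ∀ i, (fromEdgeSet {e ∈ G.edgeSet | c e = i}).IsAcyclic) :
    #(G.cliqueFinset 3) ≤ k * #G.edgeFinset := by
  obtain ⟨f, hf_mem, hf_fiber⟩ := exists_endpoint_card_fiber_le c hc
  have h := (three_mul_card_cliqueFinset_three_le_sum_degree f hf_mem).trans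
    (sum_comp_le_mul_sum hf_fiber fun v => G.degree v)
  rw [sum_degrees_eq_twice_card_edges] at h
  nlinarith

end SimpleGraph

lemma exists_forest_partition_arboricity {V : Type} [Finite V] (G : SimpleGraph V) :
    ∃ c : Sym2 V → Fin (arboricity G), ∀ i,
      (SimpleGraph.fromEdgeSet {e ∈ G.edgeSet | c e = i}).IsAcyclic := by
  -- colouring every edge differently gives a partition into forests of at most one edge
  have hne : {k : ℕ | ∃ c : Sym2 V → Fin k, ∀ i,
      (SimpleGraph.fromEdgeSet {e ∈ G.edgeSet | c e = i}).IsAcyclic}.Nonempty :=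
    ⟨Nat.card (Sym2 V), Finite.equivFin (Sym2 V), fun _ =>
      SimpleGraph.isAcyclic_fromEdgeSet_of_subsingleton fun _ he _ he' =>
        (Finite.equivFin (Sym2 V)).injective (he.2.trans he'.2.symm)⟩
  exact Nat.sInf_mem hne

/-- The number of triangles of a finite simple graph with `m` edges and arboricity `α` is at
most `α * m`. -/
theorem stmt_14 {V : Type} [Fintype V] [DecidableEq V]
    (G : SimpleGraph V) [DecidableRel G.Adj] :
    (G.cliqueFinset 3).card ≤ arboricity G * G.edgeFinset.card := by
  obtain ⟨c, hc⟩ := exists_forest_partition_arboricity G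
  exact G.card_cliqueFinset_three_le_mul_of_isAcyclic c hc
end

section
/- Every finite chordal graph admits a perfect elimination ordering: an ordering v₁, …, vₙ of its vertices such that for each k, the neighbors of v_k among v₁, …, v_{k−1} form a clique. -/
/-!
Dirac's lemma drives the induction: in a chordal graph every vertex `a` that is not adjacent to
all other vertices has a simplicial non-neighbour. Let `C` be the component of a non-neighbour
`b` after deleting `a` and its neighbours. Every vertex outside `C` with a neighbour in `C` is
adjacent to `a`, and these vertices form a clique: two non-adjacent ones, together with `a` and a
shortest path between them through `C`, would span an induced cycle of length at least four.
The graph induced on `C` and its neighbours misses `a`, so by induction it is complete or has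
two non-adjacent simplicial vertices; in either case one of them lies in `C`, where
neighbourhoods are the same as in the whole graph. Removing a simplicial vertex, ordering the
rest by induction and putting the removed vertex last gives a perfect elimination ordering.
-/

/-- A finite simple graph is chordal if it has no induced cycle of length at least 4,
i.e. no cycle graph on `n ≥ 4` vertices embeds into it as an induced subgraph. -/
def IsChordal {V : Type} (G : SimpleGraph V) : Prop :=
  ∀ n : ℕ, 4 ≤ n → IsEmpty (SimpleGraph.cycleGraph n ↪g G)

namespace SimpleGraph

variable {V : Type*} {G : SimpleGraph V}

namespace Walk

variable {u v : V}

lemma dist_getVert_getVert_of_length_eq_dist (p : G.Walk u v) (hp : p.length = G.dist u v)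
    {i j : ℕ} (hij : i ≤ j) (hj : j ≤ p.length) :
    G.dist (p.getVert i) (p.getVert j) = j - i := by
  have h := length_eq_dist_of_subwalk hp ((isSubwalk_take (p.drop i) (j - i)).trans
    (isSubwalk_drop p i))
  simp only [take_length, drop_length, drop_getVert, Nat.add_sub_cancel' hij] at h
  rw [← h, min_eq_left (by omega)]

def pathGraphEmbedding (p : G.Walk u v) (hp : p.length = G.dist u v) :
    pathGraph (p.length + 1) ↪g G where
  toFun i := p.getVert i
  inj' i j hij := by
    have key (i j : Fin (p.length + 1)) (hij : i ≤ j) (h : p.getVert i = p.getVert j) : i = j := by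
      have := p.dist_getVert_getVert_of_length_eq_dist hp hij (by omega)
      rw [h, dist_self] at this
      exact le_antisymm hij (by omega)
    rcases le_total i j with h | h
    · exact key i j h hij
    · exact (key j i h hij.symm).symm
  map_rel_iff' {i j} := by
    show G.Adj (p.getVert i) (p.getVert j) ↔ _
    rw [← dist_eq_one_iff_adj, pathGraph_adj]
    rcases le_total i j with h | h
    · rw [p.dist_getVert_getVert_of_length_eq_dist hp h (by omega)]
      omega
    · rw [dist_comm, p.dist_getVert_getVert_of_length_eq_dist hp h (by omega)]
      omega

end Walk

lemma cycleGraph_adj_iff_val {n : ℕ} {u v : Fin (n + 2)} :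
    (cycleGraph (n + 2)).Adj u v ↔ u.val + 1 = v.val ∨ v.val + 1 = u.val ∨
      (u.val = 0 ∧ v.val = n + 1) ∨ (v.val = 0 ∧ u.val = n + 1) := by
  have val_sub (x y : Fin (n + 2)) :
      ((x - y : Fin (n + 2)) : ℕ) = if y ≤ x then (x : ℕ) - y else n + 2 + (x : ℕ) - y := by
    split_ifs with h
    · exact Fin.sub_val_of_le h
    · exact Fin.coe_sub_iff_lt.2 (not_le.1 h)
  rw [cycleGraph_adj', val_sub, val_sub]
  have := u.isLt
  have := v.isLt
  split_ifs <;> simp only [Fin.le_def] at * <;> omega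

lemma nonempty_cycleGraph_embedding_of_cone {m : ℕ} (e : pathGraph (m + 1) ↪g G) {a : V}
    (ha : a ∉ Set.range e) (hadj : ∀ i, G.Adj a (e i) ↔ i = 0 ∨ i = Fin.last m) :
    Nonempty (cycleGraph (m + 2) ↪g G) := by
  refine ⟨⟨⟨Fin.cons a e, Fin.cons_injective_iff.2 ⟨ha, e.injective⟩⟩, ?_⟩⟩
  intro u v
  simp only [Function.Embedding.coeFn_mk, cycleGraph_adj_iff_val]
  induction u using Fin.cases <;> induction v using Fin.cases <;>
    simp only [Fin.cons_zero, Fin.cons_succ, Fin.val_zero, Fin.val_succ, G.irrefl, hadj,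
      G.adj_comm (e _) a, e.map_rel_iff, pathGraph_adj, Fin.ext_iff, Fin.val_last, true_and,
      false_iff] <;> omega

lemma exists_preconnected_induce_adj_closed [Finite V] {s : Set V} {b : V} (hb : b ∈ s) :
    ∃ C ⊆ s, b ∈ C ∧ (G.induce C).Preconnected ∧ ∀ c ∈ C, ∀ w ∈ s, G.Adj c w → w ∈ C := by
  obtain ⟨C, ⟨hCs, hbC, hC⟩, hmax⟩ := (Set.toFinite
    {t : Set V | t ⊆ s ∧ b ∈ t ∧ (G.induce t).Preconnected}).exists_maximal
    ⟨{b}, Set.singleton_subset_iff.2 hb, rfl, Preconnected.of_subsingleton⟩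
  refine ⟨C, hCs, hbC, hC, fun c hc w hw hcw => ?_⟩
  have hwC : {w} ∪ C ∈ {t : Set V | t ⊆ s ∧ b ∈ t ∧ (G.induce t).Preconnected} :=
    ⟨Set.union_subset (Set.singleton_subset_iff.2 hw) hCs, Or.inr hbC,
      (connected_induce_union (s := {w}) Preconnected.of_subsingleton hC rfl hc
        hcw.symm).preconnected⟩
  exact hmax hwC Set.subset_union_right (Or.inl rfl)

def IsSimplicial (G : SimpleGraph V) (v : V) : Prop := G.IsClique (G.neighborSet v)

lemma IsSimplicial.of_induce {s : Set V} {v : s} (hv : (G.induce s).IsSimplicial v)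
    (hs : G.neighborSet v ⊆ s) : G.IsSimplicial v :=
  fun x hx y hy hxy =>
    hv (x := ⟨x, hs hx⟩) (y := ⟨y, hs hy⟩) hx hy fun h => hxy (congrArg Subtype.val h)

lemma exists_isSimplicial_mem_of_induce {t C : Set V} {b : V} (hCt : C ⊆ t) (hb : b ∈ C)
    (hnbr : ∀ c ∈ C, G.neighborSet c ⊆ t) (hclique : G.IsClique (t \ C))
    (ht : ∀ u w : t, u ≠ w → ¬(G.induce t).Adj u w →
      ∃ z, (G.induce t).IsSimplicial z ∧ z ≠ u ∧ ¬(G.induce t).Adj u z) :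
    ∃ z ∈ C, G.IsSimplicial z := by
  by_cases hcomplete : ∃ u w : t, u ≠ w ∧ ¬(G.induce t).Adj u w
  · obtain ⟨u, w, huw, hn⟩ := hcomplete
    obtain ⟨z₁, hz₁, hz₁u, hnz₁⟩ := ht u w huw hn
    obtain ⟨z₂, hz₂, hz₂z₁, hnz₂⟩ := ht z₁ u hz₁u (fun h => hnz₁ h.symm)
    have : (z₁ : V) ∈ C ∨ (z₂ : V) ∈ C := by
      by_contra! h
      exact hnz₂ (hclique ⟨z₁.2, h.1⟩ ⟨z₂.2, h.2⟩ fun h => hz₂z₁ (Subtype.ext h.symm))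
    rcases this with h | h
    · exact ⟨z₁, h, hz₁.of_induce (hnbr _ h)⟩
    · exact ⟨z₂, h, hz₂.of_induce (hnbr _ h)⟩
  · push Not at hcomplete
    exact ⟨b, hb, IsSimplicial.of_induce (v := ⟨b, hCt hb⟩)
      (fun x _ y _ hxy => hcomplete x y hxy) (hnbr b hb)⟩

def IsPerfectEliminationOrder (G : SimpleGraph V) {n : ℕ} (σ : Fin n ≃ V) : Prop :=
  ∀ k i j : Fin n, i < k → j < k → i ≠ j →
    G.Adj (σ i) (σ k) → G.Adj (σ j) (σ k) → G.Adj (σ i) (σ j)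

lemma IsPerfectEliminationOrder.snoc [DecidableEq V] {v : V} (hv : G.IsSimplicial v) {n : ℕ}
    {σ : Fin n ≃ {u // u ≠ v}} (hσ : (G.induce {u | u ≠ v}).IsPerfectEliminationOrder σ) :
    G.IsPerfectEliminationOrder
      (finSuccEquivLast.trans (σ.optionCongr.trans (Equiv.optionSubtypeNe v))) := by
  set τ := finSuccEquivLast.trans (σ.optionCongr.trans (Equiv.optionSubtypeNe v))
  have hτ (i : Fin n) : τ i.castSucc = σ i := by simp [τ]
  intro k i j hik hjk hij
  induction k using Fin.lastCases with
  | last =>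
    have hτlast : τ (Fin.last n) = v := by simp [τ]
    rw [hτlast]
    exact fun hi hj => hv hi.symm hj.symm (τ.injective.ne hij)
  | cast k =>
    obtain ⟨i, rfl⟩ := Fin.exists_castSucc_eq.2 (hik.trans (Fin.castSucc_lt_last k)).ne
    obtain ⟨j, rfl⟩ := Fin.exists_castSucc_eq.2 (hjk.trans (Fin.castSucc_lt_last k)).ne
    rw [hτ, hτ, hτ]
    exact hσ k i j (by simpa using hik) (by simpa using hjk) (by simpa using hij)

end SimpleGraph

section Chordal

open SimpleGraph

variable {V : Type} {G : SimpleGraph V}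

lemma IsChordal.induce (hG : IsChordal G) (s : Set V) : IsChordal (G.induce s) :=
  fun n hn => ⟨fun e => (hG n hn).false ((Embedding.induce s).comp e)⟩

/-- Otherwise `a` and a shortest `x`–`y` path in `s` span an induced cycle of length at least
four. -/
lemma IsChordal.adj_of_reachable_induce (hG : IsChordal G) {a : V} {s : Set V} (ha : a ∉ s)
    {x y : s} (hxy : x ≠ y) (hax : G.Adj a x) (hay : G.Adj a y)
    (hs : ∀ v : s, G.Adj a v → v = x ∨ v = y) (hr : (G.induce s).Reachable x y) :
    G.Adj x y := by
  by_contra hn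
  obtain ⟨p, hp⟩ := hr.exists_walk_length_eq_dist
  have hlen : 2 ≤ p.length := hp ▸ hr.one_lt_dist_of_ne_of_not_adj hxy hn
  let f := p.pathGraphEmbedding hp
  have hf0 : f 0 = x := p.getVert_zero
  have hflast : f (Fin.last _) = y := p.getVert_length
  obtain ⟨c⟩ := nonempty_cycleGraph_embedding_of_cone ((Embedding.induce s).comp f) (a := a)
    (fun ⟨i, hi⟩ => ha (hi ▸ (f i).2)) fun i => by
      refine ⟨fun h => (hs _ h).imp (fun h => ?_) (fun h => ?_), ?_⟩
      · exact f.injective (h.trans hf0.symm)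
      · exact f.injective (h.trans hflast.symm)
      · rintro (rfl | rfl)
        · simpa [hf0] using hax
        · simpa [hflast] using hay
  exact (hG _ (by omega)).false c

lemma IsChordal.adj_of_adj_mem_preconnected (hG : IsChordal G) {a : V} {C : Set V}
    (hCa : ∀ c ∈ C, c ≠ a ∧ ¬G.Adj a c) (hC : (G.induce C).Preconnected)
    {x y cx cy : V} (hxy : x ≠ y) (hax : G.Adj a x) (hay : G.Adj a y)
    (hcx : cx ∈ C) (hcy : cy ∈ C) (hxcx : G.Adj x cx) (hycy : G.Adj y cy) : G.Adj x y := by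
  have hxC := connected_induce_union (s := {x}) Preconnected.of_subsingleton hC rfl hcx hxcx
  have hyxC := connected_induce_union (s := {y}) Preconnected.of_subsingleton
    hxC.preconnected rfl (Or.inr hcy) hycy
  refine hG.adj_of_reachable_induce (x := ⟨x, Or.inr (Or.inl rfl)⟩) (y := ⟨y, Or.inl rfl⟩)
    ?_ (fun h => hxy (congrArg Subtype.val h)) hax hay ?_ (hyxC.preconnected _ _)
  · rintro ((rfl | rfl) | rfl | h)
    · exact G.irrefl hay
    · exact G.irrefl hax
    · exact (hCa a h).1 rfl
  · rintro ⟨v, (rfl | rfl) | rfl | hv⟩ h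
    · exact Or.inr rfl
    · exact Or.inl rfl
    · exact absurd h (hCa v hv).2

theorem IsChordal.exists_isSimplicial_not_adj [Finite V] (hG : IsChordal G) {a b : V}
    (hab : a ≠ b) (hn : ¬G.Adj a b) : ∃ z, G.IsSimplicial z ∧ z ≠ a ∧ ¬G.Adj a z := by
  induction h : Nat.card V using Nat.strong_induction_on generalizing V with
  | _ n ih =>
    obtain ⟨C, hCs, hbC, hC, hclosed⟩ := exists_preconnected_induce_adj_closed (G := G)
      (s := {v | v ≠ a ∧ ¬G.Adj a v}) ⟨hab.symm, hn⟩
    have hfront {c w : V} (hc : c ∈ C) (hcw : G.Adj c w) (hw : w ∉ C) : G.Adj a w := by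
      by_contra haw
      refine hw (hclosed c hc w ⟨?_, haw⟩ hcw)
      rintro rfl
      exact (hCs hc).2 hcw.symm
    set t : Set V := {v | v ∈ C ∨ ∃ c ∈ C, G.Adj c v}
    have hat : a ∉ t := by
      rintro (ha | ⟨c, hc, hca⟩)
      · exact (hCs ha).1 rfl
      · exact (hCs hc).2 hca.symm
    have hclique : G.IsClique (t \ C) := by
      rintro x ⟨hxt, hxC⟩ y ⟨hyt, hyC⟩ hxy
      obtain ⟨cx, hcx, hcxx⟩ := hxt.resolve_left hxC
      obtain ⟨cy, hcy, hcyy⟩ := hyt.resolve_left hyC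
      exact hG.adj_of_adj_mem_preconnected (fun c hc => hCs hc) hC hxy (hfront hcx hcxx hxC)
        (hfront hcy hcyy hyC) hcx hcy hcxx.symm hcyy.symm
    obtain ⟨z, hzC, hz⟩ := exists_isSimplicial_mem_of_induce (fun c hc => Or.inl hc) hbC
      (fun c hc w hw => Or.inr ⟨c, hc, hw⟩) hclique fun u w huw hn =>
        ih _ (h ▸ Finite.card_subtype_lt hat) (hG.induce t) huw hn rfl
    exact ⟨z, hz, (hCs hzC).1, (hCs hzC).2⟩

lemma IsChordal.exists_isSimplicial [Finite V] [Nonempty V] (hG : IsChordal G) :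
    ∃ v, G.IsSimplicial v := by
  by_cases h : ∃ a b, a ≠ b ∧ ¬G.Adj a b
  · obtain ⟨a, b, hab, hn⟩ := h
    obtain ⟨z, hz, -⟩ := hG.exists_isSimplicial_not_adj hab hn
    exact ⟨z, hz⟩
  · push Not at h
    obtain ⟨v⟩ := ‹Nonempty V›
    exact ⟨v, fun x _ y _ hxy => h x y hxy⟩

theorem IsChordal.exists_isPerfectEliminationOrder [Finite V] (hG : IsChordal G) :
    ∃ n, ∃ σ : Fin n ≃ V, G.IsPerfectEliminationOrder σ := by
  induction h : Nat.card V using Nat.strong_induction_on generalizing V with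
  | _ n ih =>
    classical
    cases isEmpty_or_nonempty V
    · exact ⟨0, Equiv.equivOfIsEmpty _ _, fun k => k.elim0⟩
    obtain ⟨v, hv⟩ := hG.exists_isSimplicial
    obtain ⟨m, σ, hσ⟩ :=
      ih _ (h ▸ Finite.card_subtype_lt (not_not.2 rfl)) (hG.induce {u | u ≠ v}) rfl
    exact ⟨m + 1, _, hσ.snoc hv⟩

end Chordal

theorem stmt_17_general {V : Type} [Fintype V]
    (G : SimpleGraph V) (hG : IsChordal G) :
    ∃ σ : Fin (Fintype.card V) ≃ V,
      ∀ k i j : Fin (Fintype.card V), i < k → j < k → i ≠ j →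
        G.Adj (σ i) (σ k) → G.Adj (σ j) (σ k) → G.Adj (σ i) (σ j) := by
  obtain ⟨n, σ, hσ⟩ := hG.exists_isPerfectEliminationOrder
  obtain rfl : Fintype.card V = n := by simpa using (Fintype.card_congr σ).symm
  exact ⟨σ, hσ⟩

/-- Every finite chordal graph admits a perfect elimination ordering: an ordering
`v₁, …, vₙ` of the vertices such that for each `k` the earlier neighbors of `v_k` form a
clique. -/
theorem stmt_17 {V : Type} [Fintype V] [DecidableEq V]
    (G : SimpleGraph V) (hG : IsChordal G) :
    ∃ σ : Fin (Fintype.card V) ≃ V,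
      ∀ k i j : Fin (Fintype.card V), i < k → j < k → i ≠ j →
        G.Adj (σ i) (σ k) → G.Adj (σ j) (σ k) → G.Adj (σ i) (σ j) :=
  stmt_17_general G hG
end
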